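/- arXiv:2503.18209 — 3 statements merged into one kernel-verified Lean document; each statement's English description precedes it below -/
import Mathlib

section
/- Let (X, d) be a complete generalized metric space (d may take the value ∞) and J : X → X a strictly contractive mapping with Lipschitz constant L < 1. Then for each x ∈ X, either d(Jⁿx, Jⁿ⁺¹x) = ∞ for all nonnegative integers n, or there exists a positive integer n₀ such that: (1) d(Jⁿx, Jⁿ⁺¹x) < ∞ for all n ≥ n₀; (2) the sequence {Jⁿx} converges to a fixed point y* of J; (3) y* is the unique fixed point of J in the set Y = {y ∈ X : d(J^{n₀}x, y) < ∞}; (4) d(y, y*) ≤ (1/(1−L)) d(y, Jy) for all y ∈ Y. -/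
/-!
The extended distance `d` makes `X` an `EMetricSpace`, in which the hypothesis on Cauchy
sequences is completeness and `J` is `ContractingWith L`. If `d(Jᵐx, Jᵐ⁺¹x) < ∞` for one `m`,
the consecutive distances from then on are finite and shrink geometrically, so the Banach fixed
point theorem applies at `Jᵐ⁺¹x`. Points at finite distance from `Jᵐ⁺¹x` are at finite distance
from the limit `y*`, and for such `y` the contraction gives
`d(y, y*) ≤ d(y, Jy) + d(Jy, Jy*) ≤ d(y, Jy) + L d(y, y*)`, which yields both the estimate and
the uniqueness of `y*`.
-/

open Filter Topology ENNReal NNReal Function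

noncomputable abbrev EMetricSpace.ofEDist {X : Type*} (d : X → X → ℝ≥0∞)
    (h_eq : ∀ x y, d x y = 0 ↔ x = y) (h_symm : ∀ x y, d x y = d y x)
    (h_tri : ∀ x y z, d x z ≤ d x y + d y z) :
    EMetricSpace X where
  edist := d
  edist_self x := (h_eq x x).2 rfl
  edist_comm := h_symm
  edist_triangle := h_tri
  eq_of_edist_eq_zero h := (h_eq _ _).1 h

theorem EMetric.completeSpace_of_tendsto_edist {α : Type*} [PseudoEMetricSpace α]
    (h : ∀ u : ℕ → α, (∀ ε > 0, ∃ N, ∀ m ≥ N, ∀ n ≥ N, edist (u m) (u n) < ε) →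
      ∃ a, Tendsto (fun n => edist (u n) a) atTop (𝓝 0)) :
    CompleteSpace α :=
  EMetric.complete_of_cauchySeq_tendsto fun u hu => by
    obtain ⟨a, ha⟩ := h u (EMetric.cauchySeq_iff.1 hu)
    exact ⟨a, tendsto_iff_edist_tendsto_0.2 ha⟩

namespace ContractingWith

variable {α : Type*} [EMetricSpace α] {K : ℝ≥0} {f : α → α}

theorem edist_iterate_succ_lt_top (hf : ContractingWith K f) {x : α} {m : ℕ}
    (hm : edist (f^[m] x) (f^[m + 1] x) ≠ ∞) {n : ℕ} (hn : m ≤ n) :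
    edist (f^[n] x) (f^[n + 1] x) < ∞ := by
  obtain ⟨k, rfl⟩ := Nat.exists_eq_add_of_le hn
  have h := hf.toLipschitzWith.edist_iterate_succ_le_geometric (f^[m] x) k
  rw [← iterate_succ_apply' f m, ← iterate_add_apply, ← iterate_add_apply] at h
  rw [Nat.add_comm m k, Nat.add_right_comm]
  exact h.trans_lt (ENNReal.mul_lt_top hm.lt_top (ENNReal.pow_lt_top ENNReal.coe_lt_top))

theorem fixed_point_alternative [CompleteSpace α] (hf : ContractingWith K f) (x : α) :
    (∀ n, edist (f^[n] x) (f^[n + 1] x) = ∞) ∨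
      ∃ n₀, 0 < n₀ ∧ (∀ n ≥ n₀, edist (f^[n] x) (f^[n + 1] x) < ∞) ∧
        ∃ y, IsFixedPt f y ∧ Tendsto (fun n => f^[n] x) atTop (𝓝 y) ∧
          edist (f^[n₀] x) y < ∞ ∧
          (∀ z, IsFixedPt f z → edist (f^[n₀] x) z < ∞ → z = y) ∧
          ∀ z, edist (f^[n₀] x) z < ∞ → edist z y ≤ edist z (f z) / (1 - K) := by
  refine or_iff_not_imp_left.2 fun h => ?_
  obtain ⟨m, hm⟩ := not_forall.1 h
  have hfin := fun n (hn : m + 1 ≤ n) => hf.edist_iterate_succ_lt_top hm (m.le_succ.trans hn)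
  set x₀ := f^[m + 1] x
  have hx₀ : edist x₀ (f x₀) ≠ ∞ := by
    rw [← iterate_succ_apply' f]; exact (hfin _ le_rfl).ne
  set y := efixedPoint f hf x₀ hx₀
  have hy := hf.edist_efixedPoint_lt_top hx₀
  have hball : ∀ z, edist x₀ z < ∞ → edist z y ≠ ∞ := fun z hz =>
    ((edist_triangle_left z y x₀).trans_lt (ENNReal.add_lt_top.2 ⟨hz, hy⟩)).ne
  refine ⟨m + 1, m.succ_pos, hfin, y, hf.efixedPoint_isFixedPt hx₀, ?_, hy, ?_, ?_⟩
  · rw [← tendsto_add_atTop_iff_nat (m + 1)]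
    exact (hf.tendsto_iterate_efixedPoint hx₀).congr fun n => (iterate_add_apply f n _ x).symm
  · intro z hz hx₀z
    exact (hf.eq_or_edist_eq_top_of_fixedPoints hz (hf.efixedPoint_isFixedPt hx₀)).resolve_right
      (hball z hx₀z)
  · exact fun z hz => hf.edist_le_of_fixedPoint (hball z hz) (hf.efixedPoint_isFixedPt hx₀)

end ContractingWith

theorem ENNReal.ofReal_one_div_one_sub {L : ℝ} (hL0 : 0 ≤ L) (hL1 : L < 1) :
    ENNReal.ofReal (1 / (1 - L)) = (1 - ENNReal.ofReal L)⁻¹ := by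
  rw [one_div, ENNReal.ofReal_inv_of_pos (sub_pos.2 hL1), ENNReal.ofReal_sub 1 hL0,
    ENNReal.ofReal_one]

/-- The Diaz–Margolis fixed point alternative on complete generalized metric spaces. -/
theorem fixed_point_alternative {X : Type*} (d : X → X → ENNReal)
    (h_eq : ∀ x y : X, d x y = 0 ↔ x = y)
    (h_symm : ∀ x y : X, d x y = d y x)
    (h_tri : ∀ x y z : X, d x z ≤ d x y + d y z)
    (h_complete : ∀ u : ℕ → X,
      (∀ ε : ENNReal, 0 < ε → ∃ N : ℕ, ∀ m ≥ N, ∀ n ≥ N, d (u m) (u n) < ε) →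
      ∃ x : X, Filter.Tendsto (fun n => d (u n) x) Filter.atTop (nhds 0))
    (J : X → X) (L : ℝ) (hL0 : 0 ≤ L) (hL1 : L < 1)
    (h_contr : ∀ x y : X, d (J x) (J y) ≤ ENNReal.ofReal L * d x y)
    (x : X) :
    (∀ n : ℕ, d (J^[n] x) (J^[n + 1] x) = ⊤) ∨
      ∃ n₀ : ℕ, 0 < n₀ ∧
        (∀ n ≥ n₀, d (J^[n] x) (J^[n + 1] x) < ⊤) ∧
        ∃ ystar : X, J ystar = ystar ∧
          Filter.Tendsto (fun n => d (J^[n] x) ystar) Filter.atTop (nhds 0) ∧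
          d (J^[n₀] x) ystar < ⊤ ∧
          (∀ z : X, J z = z → d (J^[n₀] x) z < ⊤ → z = ystar) ∧
          (∀ y : X, d (J^[n₀] x) y < ⊤ →
            d y ystar ≤ ENNReal.ofReal (1 / (1 - L)) * d y (J y)) := by
  let := EMetricSpace.ofEDist d h_eq h_symm h_tri
  have : CompleteSpace X := EMetric.completeSpace_of_tendsto_edist h_complete
  have hJ : ContractingWith L.toNNReal J := ⟨Real.toNNReal_lt_one.2 hL1, h_contr⟩
  refine (hJ.fixed_point_alternative x).imp_right
    fun ⟨n₀, hn₀, hfin, y, hy, htend, hlt, huniq, hest⟩ =>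
    ⟨n₀, hn₀, hfin, y, hy, tendsto_iff_edist_tendsto_0.1 htend, hlt, huniq, fun z hz => ?_⟩
  rw [ENNReal.ofReal_one_div_one_sub hL0 hL1, mul_comm, ← div_eq_mul_inv]
  exact hest z hz
end

section
/- Let f : Ξ → ∇ be a mapping between Banach spaces (or Hilbert C*-modules) and φ : Ξ³ → [0, ∞) a function satisfying ‖f(μx + y) − μf(x) − f(y)‖ ≤ φ(x, y, 0) for all x, y ∈ Ξ and all μ with |μ| = 1. If there exists 0 ≤ L < 1 with φ(x, y, z) ≤ 2L·φ(x/2, y/2, z/2) for all x, y, z ∈ Ξ, then the limit H(x) := lim_{n→∞} f(2ⁿx)/2ⁿ exists for every x ∈ Ξ, H is ℂ-linear, and ‖f(x) − H(x)‖ ≤ (1/(2 − 2L))·φ(x, x, 0) for all x ∈ Ξ. -/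
/-!
The rescalings `2⁻ⁿ f (2ⁿ x)` are Cauchy, since the Cauchy defect of `f` at `2ⁿ x`
is bounded by `φ(2ⁿ x, 2ⁿ x, 0) ≤ (2L)ⁿ φ(x, x, 0)`, so consecutive terms differ by at most
`Lⁿ φ(x, x, 0) / 2`; summing this geometric series gives the error bound. The same estimate shows
that the defect of the limit `H` vanishes, so `H (μ x + y) = μ H x + H y` for every unit `μ`.
Such a map is `ℂ`-linear, because every `α ∈ ℂ` is a natural number times a sum of two units.
-/

open Filter Topology

theorem Complex.exists_norm_eq_one_add_eq_of_norm_le_two (β : ℂ) (hβ : ‖β‖ ≤ 2) :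
    ∃ u v : ℂ, ‖u‖ = 1 ∧ ‖v‖ = 1 ∧ u + v = β := by
  set θ := Real.arccos (‖β‖ / 2)
  refine ⟨exp ((β.arg + θ : ℝ) * I), exp ((β.arg - θ : ℝ) * I),
    norm_exp_ofReal_mul_I _, norm_exp_ofReal_mul_I _, ?_⟩
  have hcos : Real.cos θ = ‖β‖ / 2 :=
    Real.cos_arccos (by linarith [norm_nonneg β]) (by linarith)
  calc exp ((β.arg + θ : ℝ) * I) + exp ((β.arg - θ : ℝ) * I)
      = exp (β.arg * I) * (2 * cos θ) := by
        rw [two_cos, mul_add, ← exp_add, ← exp_add]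
        push_cast
        ring_nf
    _ = ‖β‖ * exp (β.arg * I) := by
        rw [← ofReal_cos, hcos]
        push_cast
        ring
    _ = β := norm_mul_exp_arg_mul_I β

theorem isLinearMap_of_map_unit_smul_add {E F : Type*} [AddCommGroup E] [Module ℂ E]
    [AddCommGroup F] [Module ℂ F] {H : E → F}
    (hH : ∀ μ : ℂ, ‖μ‖ = 1 → ∀ x y : E, H (μ • x + y) = μ • H x + H y) :
    IsLinearMap ℂ H := by
  have hadd (x y : E) : H (x + y) = H x + H y := by simpa using hH 1 norm_one x y
  have hzero : H 0 = 0 := by simpa using hadd 0 0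
  have hunit (μ : ℂ) (hμ : ‖μ‖ = 1) (x : E) : H (μ • x) = μ • H x := by
    simpa [hzero] using hH μ hμ x 0
  refine ⟨hadd, fun α x => ?_⟩
  obtain ⟨n, hn⟩ := exists_nat_gt (‖α‖ / 2)
  have hn_pos : (0 : ℝ) < n := (div_nonneg (norm_nonneg α) zero_le_two).trans_lt hn
  have hn0 : (n : ℂ) ≠ 0 := by exact_mod_cast hn_pos.ne'
  obtain ⟨u, v, hu, hv, huv⟩ := Complex.exists_norm_eq_one_add_eq_of_norm_le_two (α / n) (by
    rw [norm_div, Complex.norm_natCast, div_le_iff₀ hn_pos]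
    linarith)
  have hα : α = n * (u + v) := by rw [huv, mul_div_cancel₀ _ hn0]
  calc H (α • x) = H (n • (u • x + v • x)) := by
        rw [hα, ← Nat.cast_smul_eq_nsmul ℂ, ← add_smul, smul_smul]
    _ = n • (H (u • x) + H (v • x)) := by
        rw [← hadd]
        exact map_nsmul (AddMonoidHom.mk' H hadd) n _
    _ = α • H x := by
        rw [hunit u hu, hunit v hv, hα, ← Nat.cast_smul_eq_nsmul ℂ, ← add_smul, smul_smul]

theorem le_pow_mul_of_le_mul_half {E : Type*} [AddCommGroup E] [Module ℂ E]
    {φ : E → E → E → ℝ} {c : ℝ} (hc : 0 ≤ c)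
    (hφ : ∀ x y z : E,
      φ x y z ≤ c * φ ((2 : ℂ)⁻¹ • x) ((2 : ℂ)⁻¹ • y) ((2 : ℂ)⁻¹ • z))
    (n : ℕ) (x y z : E) :
    φ ((2 : ℂ) ^ n • x) ((2 : ℂ) ^ n • y) ((2 : ℂ) ^ n • z) ≤ c ^ n * φ x y z := by
  induction n with
  | zero => simp
  | succ n ih =>
    have halve (v : E) : (2 : ℂ)⁻¹ • (2 : ℂ) ^ (n + 1) • v = (2 : ℂ) ^ n • v := by
      rw [smul_smul, pow_succ', inv_mul_cancel_left₀ two_ne_zero]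
    calc φ ((2 : ℂ) ^ (n + 1) • x) ((2 : ℂ) ^ (n + 1) • y) ((2 : ℂ) ^ (n + 1) • z)
        ≤ c * φ ((2 : ℂ) ^ n • x) ((2 : ℂ) ^ n • y) ((2 : ℂ) ^ n • z) := by
          simpa only [halve] using
            hφ ((2 : ℂ) ^ (n + 1) • x) ((2 : ℂ) ^ (n + 1) • y) ((2 : ℂ) ^ (n + 1) • z)
      _ ≤ c * (c ^ n * φ x y z) := mul_le_mul_of_nonneg_left ih hc
      _ = c ^ (n + 1) * φ x y z := by ring

section DyadicRescale

variable {E F : Type*} [NormedAddCommGroup E] [NormedSpace ℂ E]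
  [NormedAddCommGroup F] [NormedSpace ℂ F]

noncomputable def dyadicRescale (f : E → F) (n : ℕ) (x : E) : F :=
  ((2 : ℂ) ^ n)⁻¹ • f ((2 : ℂ) ^ n • x)

@[simp]
theorem dyadicRescale_zero (f : E → F) : dyadicRescale f 0 = f := by
  ext x
  simp [dyadicRescale]

theorem dyadicRescale_succ (f : E → F) (n : ℕ) (x : E) :
    dyadicRescale f (n + 1) x = (2 : ℂ)⁻¹ • dyadicRescale f n (x + x) := by
  rw [dyadicRescale, dyadicRescale, ← two_smul ℂ x, smul_smul _ (2 : ℂ), ← pow_succ, smul_smul,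
    ← mul_inv, ← pow_succ']

variable {f : E → F} {φ : E → E → E → ℝ} {L : ℝ}

theorem norm_dyadicRescale_unit_smul_add_sub_le (hL0 : 0 ≤ L)
    (h1 : ∀ μ : ℂ, ‖μ‖ = 1 → ∀ x y : E, ‖f (μ • x + y) - μ • f x - f y‖ ≤ φ x y 0)
    (hφ : ∀ x y z : E,
      φ x y z ≤ 2 * L * φ ((2 : ℂ)⁻¹ • x) ((2 : ℂ)⁻¹ • y) ((2 : ℂ)⁻¹ • z))
    (n : ℕ) {μ : ℂ} (hμ : ‖μ‖ = 1) (x y : E) :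
    ‖dyadicRescale f n (μ • x + y) - μ • dyadicRescale f n x - dyadicRescale f n y‖
      ≤ L ^ n * φ x y 0 := by
  have hscaled := (h1 μ hμ ((2 : ℂ) ^ n • x) ((2 : ℂ) ^ n • y)).trans
    (by simpa using le_pow_mul_of_le_mul_half (by positivity) hφ n x y 0)
  calc ‖dyadicRescale f n (μ • x + y) - μ • dyadicRescale f n x - dyadicRescale f n y‖
      = ((2 : ℝ) ^ n)⁻¹ * ‖f (μ • (2 : ℂ) ^ n • x + (2 : ℂ) ^ n • y)
          - μ • f ((2 : ℂ) ^ n • x) - f ((2 : ℂ) ^ n • y)‖ := by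
        have hfactor : dyadicRescale f n (μ • x + y) - μ • dyadicRescale f n x
            - dyadicRescale f n y = ((2 : ℂ) ^ n)⁻¹ • (f (μ • (2 : ℂ) ^ n • x + (2 : ℂ) ^ n • y)
              - μ • f ((2 : ℂ) ^ n • x) - f ((2 : ℂ) ^ n • y)) := by
          simp only [dyadicRescale, smul_add, smul_comm _ μ]
          module
        rw [hfactor, norm_smul]
        simp
    _ ≤ ((2 : ℝ) ^ n)⁻¹ * ((2 * L) ^ n * φ x y 0) := by gcongr
    _ = L ^ n * φ x y 0 := by
        rw [mul_pow]
        field_simp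

theorem dist_dyadicRescale_succ_le (hL0 : 0 ≤ L)
    (h1 : ∀ μ : ℂ, ‖μ‖ = 1 → ∀ x y : E, ‖f (μ • x + y) - μ • f x - f y‖ ≤ φ x y 0)
    (hφ : ∀ x y z : E,
      φ x y z ≤ 2 * L * φ ((2 : ℂ)⁻¹ • x) ((2 : ℂ)⁻¹ • y) ((2 : ℂ)⁻¹ • z))
    (x : E) (n : ℕ) :
    dist (dyadicRescale f n x) (dyadicRescale f (n + 1) x) ≤ φ x x 0 / 2 * L ^ n := by
  have hdefect := norm_dyadicRescale_unit_smul_add_sub_le hL0 h1 hφ n norm_one x x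
  rw [one_smul, one_smul] at hdefect
  calc dist (dyadicRescale f n x) (dyadicRescale f (n + 1) x)
      = ‖(2 : ℂ)⁻¹‖
          * ‖dyadicRescale f n (x + x) - dyadicRescale f n x - dyadicRescale f n x‖ := by
        rw [dist_eq_norm, dyadicRescale_succ, ← norm_smul, ← norm_neg]
        congr 1
        module
    _ ≤ 2⁻¹ * (L ^ n * φ x x 0) := by
        rw [norm_inv, Complex.norm_two]
        gcongr
    _ = φ x x 0 / 2 * L ^ n := by ring

theorem map_unit_smul_add_of_tendsto_dyadicRescale {H : E → F} (hL0 : 0 ≤ L) (hL1 : L < 1)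
    (h1 : ∀ μ : ℂ, ‖μ‖ = 1 → ∀ x y : E, ‖f (μ • x + y) - μ • f x - f y‖ ≤ φ x y 0)
    (hφ : ∀ x y z : E,
      φ x y z ≤ 2 * L * φ ((2 : ℂ)⁻¹ • x) ((2 : ℂ)⁻¹ • y) ((2 : ℂ)⁻¹ • z))
    (hH : ∀ x, Tendsto (fun n => dyadicRescale f n x) atTop (𝓝 (H x)))
    {μ : ℂ} (hμ : ‖μ‖ = 1) (x y : E) :
    H (μ • x + y) = μ • H x + H y := by
  have hdefect_lim := ((hH (μ • x + y)).sub ((hH x).const_smul μ)).sub (hH y)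
  have hdefect_zero : Tendsto (fun n => dyadicRescale f n (μ • x + y)
      - μ • dyadicRescale f n x - dyadicRescale f n y) atTop (𝓝 0) := by
    refine squeeze_zero_norm
      (fun n => norm_dyadicRescale_unit_smul_add_sub_le hL0 h1 hφ n hμ x y) ?_
    simpa using (tendsto_pow_atTop_nhds_zero_of_lt_one hL0 hL1).mul_const (φ x y 0)
  rw [← sub_eq_zero, ← sub_sub]
  exact tendsto_nhds_unique hdefect_lim hdefect_zero

theorem norm_sub_le_of_tendsto_dyadicRescale {H : E → F} (hL0 : 0 ≤ L) (hL1 : L < 1)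
    (h1 : ∀ μ : ℂ, ‖μ‖ = 1 → ∀ x y : E, ‖f (μ • x + y) - μ • f x - f y‖ ≤ φ x y 0)
    (hφ : ∀ x y z : E,
      φ x y z ≤ 2 * L * φ ((2 : ℂ)⁻¹ • x) ((2 : ℂ)⁻¹ • y) ((2 : ℂ)⁻¹ • z))
    {x : E} (hx : Tendsto (fun n => dyadicRescale f n x) atTop (𝓝 (H x))) :
    ‖f x - H x‖ ≤ 1 / (2 - 2 * L) * φ x x 0 := by
  have h := dist_le_of_le_geometric_of_tendsto₀ L _ hL1
    (dist_dyadicRescale_succ_le hL0 h1 hφ x) hx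
  rw [dyadicRescale_zero, dist_eq_norm] at h
  calc ‖f x - H x‖ ≤ φ x x 0 / 2 / (1 - L) := h
    _ = 1 / (2 - 2 * L) * φ x x 0 := by
        rw [div_div, one_div_mul_eq_div]
        ring_nf

theorem exists_tendsto_dyadicRescale [CompleteSpace F] (hL0 : 0 ≤ L) (hL1 : L < 1)
    (h1 : ∀ μ : ℂ, ‖μ‖ = 1 → ∀ x y : E, ‖f (μ • x + y) - μ • f x - f y‖ ≤ φ x y 0)
    (hφ : ∀ x y z : E,
      φ x y z ≤ 2 * L * φ ((2 : ℂ)⁻¹ • x) ((2 : ℂ)⁻¹ • y) ((2 : ℂ)⁻¹ • z)) :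
    ∃ H : E → F, ∀ x, Tendsto (fun n => dyadicRescale f n x) atTop (𝓝 (H x)) := by
  choose H hH using fun x => cauchySeq_tendsto_of_complete
    (cauchySeq_of_le_geometric L _ hL1 (dist_dyadicRescale_succ_le hL0 h1 hφ x))
  exact ⟨H, hH⟩

end DyadicRescale

theorem additive_limit_direct_general
    {E F : Type*} [NormedAddCommGroup E] [NormedSpace ℂ E]
    [NormedAddCommGroup F] [NormedSpace ℂ F] [CompleteSpace F]
    (f : E → F) (φ : E → E → E → ℝ)
    (h1 : ∀ (μ : ℂ), ‖μ‖ = 1 → ∀ x y : E,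
      ‖f (μ • x + y) - μ • f x - f y‖ ≤ φ x y 0)
    (L : ℝ) (hL0 : 0 ≤ L) (hL1 : L < 1)
    (hφ : ∀ x y z : E,
      φ x y z ≤ 2 * L * φ ((2 : ℂ)⁻¹ • x) ((2 : ℂ)⁻¹ • y) ((2 : ℂ)⁻¹ • z)) :
    ∃ H : E → F,
      (∀ x : E, Filter.Tendsto (fun n : ℕ => ((2 : ℂ) ^ n)⁻¹ • f ((2 : ℂ) ^ n • x))
        Filter.atTop (nhds (H x))) ∧
      (∀ (α β : ℂ) (x y : E), H (α • x + β • y) = α • H x + β • H y) ∧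
      (∀ x : E, ‖f x - H x‖ ≤ 1 / (2 - 2 * L) * φ x x 0) := by
  obtain ⟨H, hH⟩ := exists_tendsto_dyadicRescale hL0 hL1 h1 hφ
  have hlin : IsLinearMap ℂ H := isLinearMap_of_map_unit_smul_add fun μ hμ =>
    map_unit_smul_add_of_tendsto_dyadicRescale hL0 hL1 h1 hφ hH hμ
  refine ⟨H, hH, fun α β x y => ?_,
    fun x => norm_sub_le_of_tendsto_dyadicRescale hL0 hL1 h1 hφ (hH x)⟩
  rw [hlin.map_add, hlin.map_smul, hlin.map_smul]

/-- Existence of the ℂ-linear limit map for the direct-method Hyers–Ulam iteration. -/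
theorem additive_limit_direct
    {E F : Type*} [NormedAddCommGroup E] [NormedSpace ℂ E]
    [NormedAddCommGroup F] [NormedSpace ℂ F] [CompleteSpace F]
    (f : E → F) (φ : E → E → E → ℝ) (hφ0 : ∀ x y z : E, 0 ≤ φ x y z)
    (h1 : ∀ (μ : ℂ), ‖μ‖ = 1 → ∀ x y : E,
      ‖f (μ • x + y) - μ • f x - f y‖ ≤ φ x y 0)
    (L : ℝ) (hL0 : 0 ≤ L) (hL1 : L < 1)
    (hφ : ∀ x y z : E,
      φ x y z ≤ 2 * L * φ ((2 : ℂ)⁻¹ • x) ((2 : ℂ)⁻¹ • y) ((2 : ℂ)⁻¹ • z)) :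
    ∃ H : E → F,
      (∀ x : E, Filter.Tendsto (fun n : ℕ => ((2 : ℂ) ^ n)⁻¹ • f ((2 : ℂ) ^ n • x))
        Filter.atTop (nhds (H x))) ∧
      (∀ (α β : ℂ) (x y : E), H (α • x + β • y) = α • H x + β • H y) ∧
      (∀ x : E, ‖f x - H x‖ ≤ 1 / (2 - 2 * L) * φ x x 0) :=
  additive_limit_direct_general f φ h1 L hL0 hL1 hφ
end

section
/- Let f : Ξ → ∇ be a mapping between complex Banach spaces and φ : Ξ³ → [0, ∞) a function satisfying ‖f(μx + y) − μf(x) − f(y)‖ ≤ φ(x, y, 0) for all x, y ∈ Ξ and all μ with |μ| = 1. If there exists 0 ≤ L < 1 with φ(x, y, z) ≤ (L/8)·φ(2x, 2y, 2z) for all x, y, z ∈ Ξ, then the limit H(x) := lim_{n→∞} 2ⁿ f(x/2ⁿ) exists for every x ∈ Ξ, H is ℂ-linear, H(x/2) = H(x)/2 for all x, and ‖f(x) − H(x)‖ ≤ (L/(8 − 8L))·φ(x, x, 0) for all x ∈ Ξ. -/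
/-!
Hyers' direct method run towards the origin: `hₙ(x) = 2ⁿ f(x / 2ⁿ)` has additivity defect
at most `(2c)ⁿ δ(x, y)` when `δ(x, y) ≤ c δ(2x, 2y)`, with `c = L / 8`. Since
`hₙ₊₁(x) = 2 hₙ(x / 2)`, consecutive terms differ by a defect of `hₙ`, so `(hₙ(x))` is Cauchy
with geometric ratio `2c` and the limit `H` is additive and commutes with unit scalars. A map
with these two properties is `ℂ`-linear: every real `r` is `n (μ + μ̄)` for some `n : ℕ` and
`|μ| = 1`, and `α = Re α + Im α · i`.
-/

open Filter Topology ComplexConjugate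

section Halving

variable {𝕜 V : Type*} [Field 𝕜] [CharZero 𝕜] [AddCommGroup V] [Module 𝕜 V]

theorem two_smul_inv_two_pow_succ_smul (n : ℕ) (v : V) :
    (2 : 𝕜) • ((2 : 𝕜) ^ (n + 1))⁻¹ • v = ((2 : 𝕜) ^ n)⁻¹ • v := by
  rw [smul_smul, pow_succ, mul_inv, mul_left_comm, mul_inv_cancel₀ two_ne_zero, mul_one]

theorem le_pow_mul_of_le_mul_two_smul {ψ : V → ℝ} {c : ℝ} (hc : 0 ≤ c)
    (hψ : ∀ v, ψ v ≤ c * ψ ((2 : 𝕜) • v)) (n : ℕ) (v : V) :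
    ψ (((2 : 𝕜) ^ n)⁻¹ • v) ≤ c ^ n * ψ v := by
  induction n with
  | zero => simp
  | succ n ih =>
    calc ψ (((2 : 𝕜) ^ (n + 1))⁻¹ • v) ≤ c * ψ (((2 : 𝕜) ^ n)⁻¹ • v) := by
          simpa only [two_smul_inv_two_pow_succ_smul] using hψ (((2 : 𝕜) ^ (n + 1))⁻¹ • v)
      _ ≤ c * (c ^ n * ψ v) := mul_le_mul_of_nonneg_left ih hc
      _ = c ^ (n + 1) * ψ v := by ring

end Halving

section Hyers

variable (𝕜 : Type*) {E F : Type*} [RCLike 𝕜] [NormedAddCommGroup E] [NormedSpace 𝕜 E]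
  [NormedAddCommGroup F] [NormedSpace 𝕜 F]

def hyersSeq (f : E → F) (x : E) (n : ℕ) : F :=
  (2 : 𝕜) ^ n • f (((2 : 𝕜) ^ n)⁻¹ • x)

noncomputable def hyersLimit (f : E → F) (x : E) : F :=
  limUnder atTop (hyersSeq 𝕜 f x)

variable {𝕜}

theorem hyersSeq_zero (f : E → F) (x : E) : hyersSeq 𝕜 f x 0 = f x := by
  simp [hyersSeq]

theorem hyersSeq_succ (f : E → F) (x : E) (n : ℕ) :
    hyersSeq 𝕜 f x (n + 1) = (2 : 𝕜) • hyersSeq 𝕜 f ((2 : 𝕜)⁻¹ • x) n := by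
  simp only [hyersSeq, smul_smul, pow_succ', mul_inv]
  rw [mul_comm (2 : 𝕜)⁻¹]

theorem hyersSeq_smul_add_sub (f : E → F) (μ : 𝕜) (x y : E) (n : ℕ) :
    hyersSeq 𝕜 f (μ • x + y) n - μ • hyersSeq 𝕜 f x n - hyersSeq 𝕜 f y n =
      (2 : 𝕜) ^ n • (f (μ • ((2 : 𝕜) ^ n)⁻¹ • x + ((2 : 𝕜) ^ n)⁻¹ • y)
        - μ • f (((2 : 𝕜) ^ n)⁻¹ • x) - f (((2 : 𝕜) ^ n)⁻¹ • y)) := by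
  simp only [hyersSeq, smul_add, smul_sub, smul_comm ((2 : 𝕜) ^ n) μ, smul_comm _ μ x]

variable {f : E → F} {δ : E → E → ℝ} {c : ℝ}

theorem norm_hyersSeq_smul_add_sub_le {μ : 𝕜}
    (hμ : ∀ x y, ‖f (μ • x + y) - μ • f x - f y‖ ≤ δ x y) (hc : 0 ≤ c)
    (hδ : ∀ x y, δ x y ≤ c * δ ((2 : 𝕜) • x) ((2 : 𝕜) • y)) (x y : E) (n : ℕ) :
    ‖hyersSeq 𝕜 f (μ • x + y) n - μ • hyersSeq 𝕜 f x n - hyersSeq 𝕜 f y n‖ ≤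
      (2 * c) ^ n * δ x y := by
  have hdecay := le_pow_mul_of_le_mul_two_smul (𝕜 := 𝕜) (ψ := fun p : E × E => δ p.1 p.2) hc
    (fun p => hδ p.1 p.2) n (x, y)
  rw [hyersSeq_smul_add_sub, norm_smul, norm_pow, RCLike.norm_two, mul_pow, mul_assoc]
  exact mul_le_mul_of_nonneg_left ((hμ _ _).trans hdecay) (by positivity)

theorem dist_hyersSeq_succ_le (hf : ∀ x y, ‖f (x + y) - f x - f y‖ ≤ δ x y) (hc : 0 ≤ c)
    (hδ : ∀ x y, δ x y ≤ c * δ ((2 : 𝕜) • x) ((2 : 𝕜) • y)) (x : E) (n : ℕ) :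
    dist (hyersSeq 𝕜 f x n) (hyersSeq 𝕜 f x (n + 1)) ≤ c * δ x x * (2 * c) ^ n := by
  set x' : E := (2 : 𝕜)⁻¹ • x
  have hx' : (2 : 𝕜) • x' = x := smul_inv_smul₀ two_ne_zero x
  have hf₁ : ∀ x y, ‖f ((1 : 𝕜) • x + y) - (1 : 𝕜) • f x - f y‖ ≤ δ x y := by
    simpa only [one_smul] using hf
  calc dist (hyersSeq 𝕜 f x n) (hyersSeq 𝕜 f x (n + 1))
      = ‖hyersSeq 𝕜 f ((1 : 𝕜) • x' + x') n - (1 : 𝕜) • hyersSeq 𝕜 f x' n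
          - hyersSeq 𝕜 f x' n‖ := by
        rw [dist_eq_norm, hyersSeq_succ, one_smul, one_smul, ← two_smul 𝕜 x', hx', two_smul,
          sub_sub]
    _ ≤ (2 * c) ^ n * δ x' x' := norm_hyersSeq_smul_add_sub_le hf₁ hc hδ x' x' n
    _ ≤ (2 * c) ^ n * (c * δ x x) := by
        gcongr
        simpa only [hx'] using hδ x' x'
    _ = c * δ x x * (2 * c) ^ n := by ring

theorem cauchySeq_hyersSeq (hf : ∀ x y, ‖f (x + y) - f x - f y‖ ≤ δ x y) (hc : 0 ≤ c)
    (hc₁ : 2 * c < 1) (hδ : ∀ x y, δ x y ≤ c * δ ((2 : 𝕜) • x) ((2 : 𝕜) • y)) (x : E) :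
    CauchySeq (hyersSeq 𝕜 f x) :=
  cauchySeq_of_le_geometric _ _ hc₁ (dist_hyersSeq_succ_le hf hc hδ x)

variable [CompleteSpace F]

theorem tendsto_hyersLimit (hf : ∀ x y, ‖f (x + y) - f x - f y‖ ≤ δ x y) (hc : 0 ≤ c)
    (hc₁ : 2 * c < 1) (hδ : ∀ x y, δ x y ≤ c * δ ((2 : 𝕜) • x) ((2 : 𝕜) • y)) (x : E) :
    Tendsto (hyersSeq 𝕜 f x) atTop (𝓝 (hyersLimit 𝕜 f x)) :=
  (cauchySeq_hyersSeq hf hc hc₁ hδ x).tendsto_limUnder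

theorem norm_sub_hyersLimit_le (hf : ∀ x y, ‖f (x + y) - f x - f y‖ ≤ δ x y) (hc : 0 ≤ c)
    (hc₁ : 2 * c < 1) (hδ : ∀ x y, δ x y ≤ c * δ ((2 : 𝕜) • x) ((2 : 𝕜) • y)) (x : E) :
    ‖f x - hyersLimit 𝕜 f x‖ ≤ c / (1 - 2 * c) * δ x x := by
  have h := dist_le_of_le_geometric_of_tendsto₀ _ _ hc₁ (dist_hyersSeq_succ_le hf hc hδ x)
    (tendsto_hyersLimit hf hc hc₁ hδ x)
  rwa [hyersSeq_zero, dist_eq_norm, ← div_mul_eq_mul_div] at h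

theorem hyersLimit_smul_add {μ : 𝕜} (hμ : ∀ x y, ‖f (μ • x + y) - μ • f x - f y‖ ≤ δ x y)
    (hf : ∀ x y, ‖f (x + y) - f x - f y‖ ≤ δ x y) (hc : 0 ≤ c) (hc₁ : 2 * c < 1)
    (hδ : ∀ x y, δ x y ≤ c * δ ((2 : 𝕜) • x) ((2 : 𝕜) • y)) (x y : E) :
    hyersLimit 𝕜 f (μ • x + y) = μ • hyersLimit 𝕜 f x + hyersLimit 𝕜 f y := by
  have hdefect : Tendsto (fun n => hyersSeq 𝕜 f (μ • x + y) n - μ • hyersSeq 𝕜 f x n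
      - hyersSeq 𝕜 f y n) atTop (𝓝 0) := by
    refine squeeze_zero_norm (norm_hyersSeq_smul_add_sub_le hμ hc hδ x y) ?_
    simpa using (tendsto_pow_atTop_nhds_zero_of_lt_one (mul_nonneg zero_le_two hc) hc₁).mul_const
      (δ x y)
  have hsum := hdefect.add (((tendsto_hyersLimit hf hc hc₁ hδ x).const_smul μ).add
    (tendsto_hyersLimit hf hc hc₁ hδ y))
  rw [zero_add] at hsum
  refine tendsto_nhds_unique (tendsto_hyersLimit hf hc hc₁ hδ _) (hsum.congr fun n => ?_)
  abel

end Hyers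

theorem exists_norm_eq_one_re_eq {s : ℝ} (hs : |s| ≤ 1) : ∃ μ : ℂ, ‖μ‖ = 1 ∧ μ.re = s := by
  obtain ⟨hs₀, hs₁⟩ := abs_le.mp hs
  exact ⟨Complex.exp (Real.arccos s * Complex.I), Complex.norm_exp_ofReal_mul_I _,
    by rw [Complex.exp_ofReal_mul_I_re, Real.cos_arccos hs₀ hs₁]⟩

section UnitCircle

variable {E F : Type*} [AddCommGroup E] [Module ℂ E] [AddCommGroup F] [Module ℂ F]

theorem AddMonoidHom.map_ofReal_smul_of_map_smul_of_norm_eq_one (H : E →+ F)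
    (hH : ∀ μ : ℂ, ‖μ‖ = 1 → ∀ x, H (μ • x) = μ • H x) (r : ℝ) (x : E) :
    H ((r : ℂ) • x) = (r : ℂ) • H x := by
  obtain ⟨n, hn⟩ := exists_nat_gt |r|
  have hn₀ : (0 : ℝ) < n := (abs_nonneg r).trans_lt hn
  obtain ⟨μ, hμ, hre⟩ := exists_norm_eq_one_re_eq (s := r / (2 * n)) <| by
    rw [abs_div, abs_of_pos (a := 2 * (n : ℝ)) (by linarith), div_le_one (by linarith)]
    linarith
  have hn₀' : (n : ℂ) ≠ 0 := by exact_mod_cast hn₀.ne'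
  have hr : (r : ℂ) = (n : ℂ) * (μ + conj μ) := by
    rw [Complex.add_conj, hre]
    push_cast
    field_simp
  have hμ' : ‖conj μ‖ = 1 := by rwa [Complex.norm_conj]
  simp only [hr, mul_smul, add_smul, Nat.cast_smul_eq_nsmul, map_nsmul, map_add, hH μ hμ,
    hH _ hμ']

theorem isLinearMap_of_map_smul_add_of_norm_eq_one {H : E → F}
    (hH : ∀ μ : ℂ, ‖μ‖ = 1 → ∀ x y, H (μ • x + y) = μ • H x + H y) : IsLinearMap ℂ H := by
  let H' : E →+ F := AddMonoidHom.mk' H fun x y => by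
    simpa only [one_smul] using hH 1 norm_one x y
  have h₀ : H 0 = 0 := H'.map_zero
  have hunit (μ : ℂ) (hμ : ‖μ‖ = 1) (x : E) : H' (μ • x) = μ • H' x := by
    show H (μ • x) = μ • H x
    simpa only [add_zero, h₀] using hH μ hμ x 0
  refine ⟨H'.map_add, fun α x => ?_⟩
  calc H' (α • x) = H' ((α.re : ℂ) • x + (α.im : ℂ) • Complex.I • x) := by
        rw [smul_smul, ← add_smul, Complex.re_add_im]
    _ = α • H' x := by
        rw [map_add, H'.map_ofReal_smul_of_map_smul_of_norm_eq_one hunit,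
          H'.map_ofReal_smul_of_map_smul_of_norm_eq_one hunit, hunit _ Complex.norm_I, smul_smul,
          ← add_smul, Complex.re_add_im]

end UnitCircle

/-- Existence of the ℂ-linear limit map for the inverse-direction Hyers–Ulam iteration. -/
theorem additive_limit_inverse
    {E F : Type*} [NormedAddCommGroup E] [NormedSpace ℂ E]
    [NormedAddCommGroup F] [NormedSpace ℂ F] [CompleteSpace F]
    (f : E → F) (φ : E → E → E → ℝ) (hφ0 : ∀ x y z : E, 0 ≤ φ x y z)
    (h1 : ∀ (μ : ℂ), ‖μ‖ = 1 → ∀ x y : E,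
      ‖f (μ • x + y) - μ • f x - f y‖ ≤ φ x y 0)
    (L : ℝ) (hL0 : 0 ≤ L) (hL1 : L < 1)
    (hφ : ∀ x y z : E,
      φ x y z ≤ L / 8 * φ ((2 : ℂ) • x) ((2 : ℂ) • y) ((2 : ℂ) • z)) :
    ∃ H : E → F,
      (∀ x : E, Filter.Tendsto (fun n : ℕ => (2 : ℂ) ^ n • f (((2 : ℂ) ^ n)⁻¹ • x))
        Filter.atTop (nhds (H x))) ∧
      (∀ (α β : ℂ) (x y : E), H (α • x + β • y) = α • H x + β • H y) ∧
      (∀ x : E, H ((2 : ℂ)⁻¹ • x) = (2 : ℂ)⁻¹ • H x) ∧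
      (∀ x : E, ‖f x - H x‖ ≤ L / (8 - 8 * L) * φ x x 0) := by
  have hadd : ∀ x y, ‖f (x + y) - f x - f y‖ ≤ φ x y 0 := by
    simpa only [one_smul] using h1 1 norm_one
  have hδ : ∀ x y, φ x y 0 ≤ L / 8 * φ ((2 : ℂ) • x) ((2 : ℂ) • y) 0 := by
    simpa only [smul_zero] using fun x y => hφ x y 0
  have hc : 0 ≤ L / 8 := by positivity
  have hc₁ : 2 * (L / 8) < 1 := by linarith
  have hlin : IsLinearMap ℂ (hyersLimit ℂ f) := isLinearMap_of_map_smul_add_of_norm_eq_one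
    fun μ hμ => hyersLimit_smul_add (h1 μ hμ) hadd hc hc₁ hδ
  refine ⟨hyersLimit ℂ f, tendsto_hyersLimit hadd hc hc₁ hδ, fun α β x y => ?_,
    fun x => hlin.map_smul _ x, fun x => ?_⟩
  · rw [hlin.map_add, hlin.map_smul, hlin.map_smul]
  calc ‖f x - hyersLimit ℂ f x‖ ≤ L / 8 / (1 - 2 * (L / 8)) * φ x x 0 :=
        norm_sub_hyersLimit_le hadd hc hc₁ hδ x
    _ ≤ L / (8 - 8 * L) * φ x x 0 := by
        refine mul_le_mul_of_nonneg_right ?_ (hφ0 x x 0)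
        rw [div_div]
        exact div_le_div_of_nonneg_left hL0 (by linarith) (by linarith)
end
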